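/- Given any shortcut set 𝒮 transforming an undirected weighted graph G into a (k,k+1)-graph, there exists a shortcut set 𝒮' with |𝒮'| ≤ |𝒮| also transforming G into a (k,k+1)-graph such that every shortcut {u,v} ∈ 𝒮' satisfies hopdist_G(u,v) = 2. -/

import Mathlib

open scoped ENNReal Classical

/-- A walk from `u` is recorded as the list `p` of vertices visited after `u`;
it ends at `v` if the last vertex of `u :: p` is `v`. -/
def WalkEnds {V : Type*} (u : V) (p : List V) (v : V) : Prop := p.getLastD u = v

/-- A weighted (di)graph on vertex set `V`: weight `⊤` means "no edge". -/
structure WGraph (V : Type*) where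
  w : V → V → ℝ≥0∞

namespace WGraph

variable {V : Type*} (G : WGraph V)

/-- Total weight of the walk `u :: p`. -/
noncomputable def walkWeight : V → List V → ℝ≥0∞
  | _, [] => 0
  | u, v :: p => G.w u v + walkWeight v p

/-- Weight distance. -/
noncomputable def dist (u v : V) : ℝ≥0∞ :=
  sInf {c | ∃ p : List V, WalkEnds u p v ∧ G.walkWeight u p = c}

/-- Hop distance: the minimum number of edges among minimum-weight walks;
`⊤` if `v` is unreachable from `u`. -/
noncomputable def hopdist (u v : V) : ℕ∞ :=
  if G.dist u v = ⊤ then ⊤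
  else sInf {n : ℕ∞ | ∃ p : List V, WalkEnds u p v ∧
    G.walkWeight u p = G.dist u v ∧ (p.length : ℕ∞) = n}

/-- The set of vertices reachable from `u`, other than `u` itself. -/
def Reach (u : V) : Set V := {v | v ≠ u ∧ G.dist u v ≠ ⊤}

/-- `S` is a `ρ`-closest neighbor set of `u`. -/
def IsClosest (ρ : ℕ) (u : V) (S : Set V) : Prop :=
  S ⊆ G.Reach u ∧ S.ncard = min (G.Reach u).ncard ρ ∧
    ∀ v ∈ S, ∀ x ∈ G.Reach u \ S, G.dist u v ≤ G.dist u x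

/-- `u` has a `(k,ρ)`-ball: some `ρ`-closest neighbor set lies within hop distance `k`. -/
def HasBall (k ρ : ℕ) (u : V) : Prop :=
  ∃ S : Set V, G.IsClosest ρ u S ∧ ∀ v ∈ S, G.hopdist u v ≤ (k : ℕ∞)

/-- `G` is a `(k,ρ)`-graph. -/
def IsKRhoGraph (k ρ : ℕ) : Prop := ∀ u, G.HasBall k ρ u

/-- `G` is undirected (symmetric weights). -/
def Symm : Prop := ∀ u v, G.w u v = G.w v u

/-- All edge weights are strictly positive (trivial for non-edges of weight `⊤`). -/
def Positive : Prop := ∀ u v, 0 < G.w u v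

/-- `(u,v)` is a (potential) shortcut: `v` is reachable from `u` and the hop distance
exceeds `1`. -/
def IsShortcut (u v : V) : Prop := G.dist u v ≠ ⊤ ∧ 1 < G.hopdist u v

/-- Add each pair in `S` as a directed edge of weight `G.dist`. -/
noncomputable def addD (S : Set (V × V)) : WGraph V :=
  ⟨fun a b => G.w a b ⊓ sInf {c | (a, b) ∈ S ∧ c = G.dist a b}⟩

/-- Add each pair in `S` as an undirected edge of weight `G.dist`. -/
noncomputable def addU (S : Set (V × V)) : WGraph V :=
  ⟨fun a b => G.w a b ⊓ sInf {c | ((a, b) ∈ S ∨ (b, a) ∈ S) ∧ c = G.dist a b}⟩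

/-- `S` is a (directed) `(k,ρ)`-shortcut set for `G`. -/
def IsShortcutSetD (k ρ : ℕ) (S : Set (V × V)) : Prop :=
  (∀ p ∈ S, G.IsShortcut p.1 p.2) ∧ (G.addD S).IsKRhoGraph k ρ ∧
    ∀ x y, (G.addD S).dist x y = G.dist x y

/-- `S` is an (undirected) `(k,ρ)`-shortcut set for `G`. -/
def IsShortcutSetU (k ρ : ℕ) (S : Set (V × V)) : Prop :=
  (∀ p ∈ S, G.IsShortcut p.1 p.2) ∧ (G.addU S).IsKRhoGraph k ρ ∧
    ∀ x y, (G.addU S).dist x y = G.dist x y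

end WGraph

-- helpers
namespace StmtAux

lemma getLastD_app {α : Type*} (s : List α) (a : α) (t : List α) (d : α) :
    (s ++ a :: t).getLastD d = t.getLastD a := by
  induction s generalizing d with
  | nil => exact List.getLastD_cons
  | cons b s ih => rw [List.cons_append, List.getLastD_cons]; exact ih b

lemma getLastD_mem {α : Type*} {l : List α} (h : l ≠ []) (d : α) : l.getLastD d ∈ l := by
  rcases List.eq_nil_or_concat l with rfl | ⟨l', a, rfl⟩
  · exact absurd rfl h
  · rw [List.concat_eq_append, List.getLastD_concat]; simp

lemma add_eq_add_of_le {a b A B : ℝ≥0∞} (ha : a ≤ A) (hb : b ≤ B) (h : A + B ≤ a + b)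
    (hfin : a + b ≠ ⊤) : A = a ∧ B = b := by
  have hbt : b ≠ ⊤ := fun hb' => hfin (by rw [hb', add_top])
  have hat : a ≠ ⊤ := fun ha' => hfin (by rw [ha', top_add])
  constructor
  · by_contra hne
    have h1 : a < A := lt_of_le_of_ne ha (Ne.symm hne)
    have : a + b < A + B := lt_of_lt_of_le (ENNReal.add_lt_add_right hbt h1) (add_le_add_right hb _)
    exact absurd (lt_of_lt_of_le this h) (lt_irrefl _)
  · by_contra hne
    have h1 : b < B := lt_of_le_of_ne hb (Ne.symm hne)
    have : a + b < A + B := lt_of_lt_of_le (ENNReal.add_lt_add_left hat h1) (add_le_add_left ha _)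
    exact absurd (lt_of_lt_of_le this h) (lt_irrefl _)

lemma exists_dup_decomp {α : Type*} {l : List α} (h : ¬ l.Nodup) :
    ∃ a l1 l2 l3, l = l1 ++ a :: (l2 ++ a :: l3) := by
  induction l with
  | nil => exact absurd List.nodup_nil h
  | cons a t ih =>
    by_cases ha : a ∈ t
    · obtain ⟨s, r, rfl⟩ := List.append_of_mem ha
      exact ⟨a, [], s, r, by simp⟩
    · have ht : ¬ t.Nodup := fun hn => h (List.nodup_cons.2 ⟨ha, hn⟩)
      obtain ⟨x, l1, l2, l3, rfl⟩ := ih ht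
      exact ⟨x, a :: l1, l2, l3, rfl⟩

lemma tail_append_singleton {α : Type*} {l : List α} (h : l ≠ []) (a : α) :
    (l ++ [a]).tail = l.tail ++ [a] := by
  cases l with
  | nil => exact absurd rfl h
  | cons b t => simp

lemma reverse_cons_of_getLastD {α : Type*} {l : List α} {u d : α} (h : l.getLastD d = u)
    (hne : l ≠ []) : l.reverse = u :: l.reverse.tail := by
  rcases List.eq_nil_or_concat l with rfl | ⟨l', a, rfl⟩
  · exact absurd rfl hne
  · rw [List.concat_eq_append] at h ⊢
    rw [List.getLastD_concat] at h
    subst h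
    simp

end StmtAux

namespace WGraph

variable {V : Type*} (G : WGraph V)

open StmtAux

lemma walkEnds_nil {u v : V} : WalkEnds u [] v ↔ u = v := by
  unfold WalkEnds; simp

lemma walkEnds_cons {u a v : V} {p : List V} : WalkEnds u (a :: p) v ↔ WalkEnds a p v := by
  unfold WalkEnds; rw [List.getLastD_cons]

lemma walkEnds_concat {u v : V} (p : List V) : WalkEnds u (p ++ [v]) v := by
  unfold WalkEnds; rw [List.getLastD_concat]

lemma walkEnds_append {u v z : V} {p q : List V} (h1 : WalkEnds u p v) (h2 : WalkEnds v q z) :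
    WalkEnds u (p ++ q) z := by
  cases q with
  | nil => rw [walkEnds_nil] at h2; subst h2; rwa [List.append_nil]
  | cons b t =>
    unfold WalkEnds at h2 ⊢
    rw [getLastD_app]
    rw [List.getLastD_cons] at h2
    exact h2

@[simp] lemma walkWeight_nil (u : V) : G.walkWeight u [] = 0 := rfl

@[simp] lemma walkWeight_cons (u a : V) (p : List V) :
    G.walkWeight u (a :: p) = G.w u a + G.walkWeight a p := rfl

lemma walkWeight_split (u x : V) (p1 p2 : List V) :
    G.walkWeight u (p1 ++ x :: p2) = G.walkWeight u (p1 ++ [x]) + G.walkWeight x p2 := by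
  induction p1 generalizing u with
  | nil => simp [add_assoc]
  | cons a t ih => simp only [List.cons_append, walkWeight_cons, ih a, add_assoc]

lemma walkWeight_append {u v : V} (p q : List V) (h : WalkEnds u p v) :
    G.walkWeight u (p ++ q) = G.walkWeight u p + G.walkWeight v q := by
  rcases List.eq_nil_or_concat p with rfl | ⟨p1, x, rfl⟩
  · rw [walkEnds_nil] at h; subst h; simp
  · rw [List.concat_eq_append] at h ⊢
    have hx : x = v := by
      have : (p1 ++ [x]).getLastD u = x := List.getLastD_concat
      unfold WalkEnds at h
      rw [this] at h; exact h
    subst hx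
    rw [List.append_assoc, List.singleton_append, walkWeight_split]

lemma dist_le_walk {u v : V} {p : List V} (h : WalkEnds u p v) :
    G.dist u v ≤ G.walkWeight u p := sInf_le ⟨p, h, rfl⟩

@[simp] lemma dist_self (u : V) : G.dist u u = 0 :=
  le_antisymm (by simpa using G.dist_le_walk (p := []) (walkEnds_nil.2 rfl)) zero_le

lemma dist_le_w (u v : V) : G.dist u v ≤ G.w u v := by
  have h : WalkEnds u [v] v := by unfold WalkEnds; rw [List.getLastD_cons]; rfl
  simpa using G.dist_le_walk h

lemma exists_nodup_walk_le (v : V) : ∀ (n : ℕ) (u : V) (p : List V), p.length ≤ n →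
    WalkEnds u p v →
    ∃ q, WalkEnds u q v ∧ (u :: q).Nodup ∧ G.walkWeight u q ≤ G.walkWeight u p ∧
      ∀ x ∈ q, x ∈ p := by
  intro n
  induction n with
  | zero =>
    intro u p hlen h
    rw [List.length_eq_zero_iff.1 (Nat.le_zero.1 hlen)] at h ⊢
    exact ⟨[], h, by simp, le_rfl, by simp⟩
  | succ m ih =>
    intro u p hlen h
    by_cases hu : u ∈ p
    · obtain ⟨p1, p2, rfl⟩ := List.append_of_mem hu
      have h2 : WalkEnds u p2 v := by
        unfold WalkEnds at h ⊢; rwa [getLastD_app] at h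
      have hlen2 : p2.length ≤ m := by simp [List.length_append] at hlen; omega
      obtain ⟨q, hq1, hq2, hq3, hq4⟩ := ih u p2 hlen2 h2
      refine ⟨q, hq1, hq2, le_trans hq3 ?_, fun x hx => ?_⟩
      · rw [walkWeight_split]; exact le_add_self
      · simp only [List.mem_append, List.mem_cons]
        exact Or.inr (Or.inr (hq4 x hx))
    · cases p with
      | nil => exact ⟨[], h, by simp, le_rfl, by simp⟩
      | cons a t =>
        have h2 : WalkEnds a t v := walkEnds_cons.1 h
        have hlen2 : t.length ≤ m := by simp at hlen; omega
        obtain ⟨q, hq1, hq2, hq3, hq4⟩ := ih a t hlen2 h2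
        refine ⟨a :: q, walkEnds_cons.2 hq1, ?_, ?_, ?_⟩
        · rw [List.nodup_cons]
          refine ⟨fun hmem => hu ?_, hq2⟩
          rcases List.mem_cons.1 hmem with rfl | hq
          · exact List.mem_cons_self
          · exact List.mem_cons.2 (Or.inr (hq4 _ hq))
        · simp only [walkWeight_cons]
          exact add_le_add_right hq3 _
        · intro x hx
          rcases List.mem_cons.1 hx with rfl | hq
          · exact List.mem_cons_self
          · exact List.mem_cons.2 (Or.inr (hq4 _ hq))

end WGraph
namespace WGraph

variable {V : Type*} (G : WGraph V)

open StmtAux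

lemma exists_min_walk [Finite V] {u v : V} (h : G.dist u v ≠ ⊤) :
    ∃ p, WalkEnds u p v ∧ G.walkWeight u p = G.dist u v ∧ (u :: p).Nodup := by
  classical
  have := Fintype.ofFinite V
  set A := {c | ∃ p : List V, WalkEnds u p v ∧ G.walkWeight u p = c} with hA
  set B := {c | ∃ p : List V, WalkEnds u p v ∧ (u :: p).Nodup ∧ G.walkWeight u p = c} with hB
  have hBA : B ⊆ A := by rintro c ⟨p, h1, _, h3⟩; exact ⟨p, h1, h3⟩
  have hcof : ∀ c ∈ A, ∃ b ∈ B, b ≤ c := by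
    rintro c ⟨p, h1, rfl⟩
    obtain ⟨q, hq1, hq2, hq3, -⟩ := G.exists_nodup_walk_le v p.length u p le_rfl h1
    exact ⟨G.walkWeight u q, ⟨q, hq1, hq2, rfl⟩, hq3⟩
  have hAB : sInf A = sInf B := by
    refine le_antisymm (sInf_le_sInf hBA) (le_sInf fun c hc => ?_)
    obtain ⟨b, hb, hbc⟩ := hcof c hc
    exact le_trans (sInf_le hb) hbc
  have hAne : A.Nonempty := by
    by_contra hne
    rw [Set.not_nonempty_iff_eq_empty] at hne
    apply h
    show sInf A = ⊤
    rw [hne, sInf_empty]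
  have hBne : B.Nonempty := by
    obtain ⟨c, hc⟩ := hAne
    obtain ⟨b, hb, -⟩ := hcof c hc
    exact ⟨b, hb⟩
  have hBfin : B.Finite := by
    have hsub : B ⊆ (fun p : List V => G.walkWeight u p) '' {p : List V | p.length ≤ Fintype.card V} := by
      rintro c ⟨p, -, h2, rfl⟩
      refine ⟨p, ?_, rfl⟩
      have := List.Nodup.length_le_card (List.nodup_cons.1 h2).2
      simp only [Set.mem_setOf_eq]
      omega
    exact Set.Finite.subset (Set.Finite.image _ (List.finite_length_le V (Fintype.card V))) hsub
  have hmem : sInf B ∈ B := Set.Nonempty.csInf_mem hBne hBfin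
  obtain ⟨p, h1, h2, h3⟩ := hmem
  refine ⟨p, h1, ?_, h2⟩
  show G.walkWeight u p = sInf A
  rw [hAB, h3]

lemma dist_triangle [Finite V] (u v z : V) : G.dist u z ≤ G.dist u v + G.dist v z := by
  by_cases h1 : G.dist u v = ⊤
  · simp [h1]
  by_cases h2 : G.dist v z = ⊤
  · simp [h2]
  obtain ⟨p, hp, hpw, -⟩ := G.exists_min_walk h1
  obtain ⟨q, hq, hqw, -⟩ := G.exists_min_walk h2
  calc G.dist u z ≤ G.walkWeight u (p ++ q) := G.dist_le_walk (walkEnds_append hp hq)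
    _ = _ := by rw [G.walkWeight_append _ _ hp, hpw, hqw]

lemma walk_decomp [Finite V] {u v : V} {p : List V} (h : WalkEnds u p v)
    (hw : G.walkWeight u p = G.dist u v) (hfin : G.dist u v ≠ ⊤)
    {l1 l2 : List V} {x : V} (hd : u :: p = l1 ++ x :: l2) :
    (∃ q, WalkEnds u q x ∧ G.walkWeight u q = G.dist u x ∧ u :: q = l1 ++ [x]) ∧
      WalkEnds x l2 v ∧ G.walkWeight x l2 = G.dist x v ∧
      G.dist u v = G.dist u x + G.dist x v := by
  cases l1 with
  | nil =>
    simp only [List.nil_append, List.cons.injEq] at hd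
    obtain ⟨rfl, rfl⟩ := hd
    exact ⟨⟨[], walkEnds_nil.2 rfl, by simp, rfl⟩, h, hw, by simp⟩
  | cons c t =>
    rw [List.cons_append] at hd
    injection hd with h1 h2
    subst h1
    subst h2
    have hend2 : WalkEnds x l2 v := by
      unfold WalkEnds at h ⊢
      rwa [getLastD_app] at h
    have hend1 : WalkEnds u (t ++ [x]) x := walkEnds_concat _
    have hsplit : G.walkWeight u (t ++ x :: l2) =
        G.walkWeight u (t ++ [x]) + G.walkWeight x l2 := G.walkWeight_split u x t l2
    have hA : G.dist u x ≤ G.walkWeight u (t ++ [x]) := G.dist_le_walk hend1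
    have hB : G.dist x v ≤ G.walkWeight x l2 := G.dist_le_walk hend2
    have htri : G.dist u v ≤ G.dist u x + G.dist x v := G.dist_triangle u x v
    have hsq : G.dist u x + G.dist x v ≤ G.dist u v := by
      calc G.dist u x + G.dist x v ≤ G.walkWeight u (t ++ [x]) + G.walkWeight x l2 :=
            add_le_add hA hB
        _ = G.walkWeight u (t ++ x :: l2) := hsplit.symm
        _ = G.dist u v := hw
    have heq : G.dist u v = G.dist u x + G.dist x v := le_antisymm htri hsq
    have hcomp := add_eq_add_of_le hA hB
      (by rw [← hsplit, hw, heq]) (by rw [← heq]; exact hfin)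
    exact ⟨⟨t ++ [x], hend1, hcomp.1, by simp⟩, hend2, hcomp.2, heq⟩

lemma walkWeight_pos (hpos : G.Positive) (x c : V) (r : List V) :
    0 < G.walkWeight x (c :: r) := by
  calc (0 : ℝ≥0∞) < G.w x c := hpos x c
    _ ≤ _ := by rw [walkWeight_cons]; exact le_add_right le_rfl

lemma walk_decomp2 [Finite V] (hpos : G.Positive) {u v : V} {p : List V} (h : WalkEnds u p v)
    (hw : G.walkWeight u p = G.dist u v) (hfin : G.dist u v ≠ ⊤)
    {l1 mid l2 : List V} {x y : V} (hd : u :: p = l1 ++ x :: (mid ++ y :: l2)) :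
    G.dist u y = G.dist u x + G.dist x y ∧ G.dist x y = G.walkWeight x (mid ++ [y]) ∧
      G.dist u x < G.dist u y ∧ G.dist u y ≤ G.dist u v ∧ G.dist u y ≠ ⊤ := by
  have hd2 : u :: p = (l1 ++ x :: mid) ++ y :: l2 := by rw [hd]; simp
  obtain ⟨⟨qy, hqyE, hqyW, hqyS⟩, -, -, heqY⟩ := G.walk_decomp h hw hfin hd2
  have huy_fin : G.dist u y ≠ ⊤ := by
    intro ht; rw [heqY, ht, top_add] at hfin; exact hfin rfl
  have huy_le : G.dist u y ≤ G.dist u v := by rw [heqY]; exact le_add_right le_rfl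
  have hd3 : u :: qy = l1 ++ x :: (mid ++ [y]) := by rw [hqyS]; simp
  obtain ⟨-, hsufE, hsufW, hsum⟩ := G.walk_decomp hqyE hqyW huy_fin hd3
  have hxy : G.dist x y = G.walkWeight x (mid ++ [y]) := hsufW.symm
  have hxy_pos : G.dist x y ≠ 0 := by
    rw [hxy]
    cases mid with
    | nil => exact (G.walkWeight_pos hpos x y []).ne'
    | cons c r => exact (G.walkWeight_pos hpos x c (r ++ [y])).ne'
  have hux_fin : G.dist u x ≠ ⊤ := by
    intro ht; rw [hsum, ht, top_add] at huy_fin; exact huy_fin rfl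
  have hlt : G.dist u x < G.dist u y := by
    rw [hsum]; exact ENNReal.lt_add_right hux_fin hxy_pos
  exact ⟨hsum, hxy, hlt, huy_le, huy_fin⟩

lemma hopdist_eq {u v : V} (hfin : G.dist u v ≠ ⊤) :
    G.hopdist u v = sInf {n : ℕ∞ | ∃ p : List V, WalkEnds u p v ∧
      G.walkWeight u p = G.dist u v ∧ (p.length : ℕ∞) = n} := by
  unfold hopdist; rw [if_neg hfin]

lemma hopdist_le_length {u v : V} {p : List V} (h : WalkEnds u p v)
    (hw : G.walkWeight u p = G.dist u v) (hfin : G.dist u v ≠ ⊤) :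
    G.hopdist u v ≤ (p.length : ℕ∞) := by
  rw [G.hopdist_eq hfin]; exact sInf_le ⟨p, h, hw, rfl⟩

lemma exists_hop_walk [Finite V] {u v : V} (hfin : G.dist u v ≠ ⊤) :
    ∃ p, WalkEnds u p v ∧ G.walkWeight u p = G.dist u v ∧ (p.length : ℕ∞) = G.hopdist u v := by
  have hne : Set.Nonempty {n : ℕ∞ | ∃ p : List V, WalkEnds u p v ∧
      G.walkWeight u p = G.dist u v ∧ (p.length : ℕ∞) = n} := by
    obtain ⟨p, h1, h2, -⟩ := G.exists_min_walk hfin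
    exact ⟨p.length, p, h1, h2, rfl⟩
  have := csInf_mem hne
  rw [← G.hopdist_eq hfin] at this
  obtain ⟨p, h1, h2, h3⟩ := this
  exact ⟨p, h1, h2, h3⟩

lemma hopdist_ne_top [Finite V] {u v : V} (hfin : G.dist u v ≠ ⊤) : G.hopdist u v ≠ ⊤ := by
  obtain ⟨p, -, -, h3⟩ := G.exists_hop_walk hfin
  rw [← h3]
  exact (WithTop.coe_lt_top _).ne

end WGraph
namespace WGraph

variable {V : Type*} (G : WGraph V)

open StmtAux

lemma walkWeight_mono {H : WGraph V} (h : ∀ a b, H.w a b ≤ G.w a b) :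
    ∀ (p : List V) (u : V), H.walkWeight u p ≤ G.walkWeight u p
  | [], u => le_rfl
  | a :: q, u => by
    simp only [walkWeight_cons]
    exact add_le_add (h u a) (walkWeight_mono h q a)

lemma dist_le_walk_of [Finite V] {H : WGraph V} (h2 : ∀ a b, G.dist a b ≤ H.w a b) :
    ∀ (p : List V) (u v : V), WalkEnds u p v → G.dist u v ≤ H.walkWeight u p
  | [], u, v, h => by
    rw [walkEnds_nil] at h; subst h; simp
  | a :: q, u, v, h => by
    calc G.dist u v ≤ G.dist u a + G.dist a v := G.dist_triangle u a v
      _ ≤ H.w u a + H.walkWeight a q :=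
          add_le_add (h2 u a) (dist_le_walk_of h2 q a v (walkEnds_cons.1 h))
      _ = H.walkWeight u (a :: q) := rfl

lemma dist_congr [Finite V] {H : WGraph V} (h1 : ∀ a b, H.w a b ≤ G.w a b)
    (h2 : ∀ a b, G.dist a b ≤ H.w a b) (u v : V) : H.dist u v = G.dist u v := by
  refine le_antisymm (le_sInf ?_) (le_sInf ?_)
  · rintro c ⟨p, hp, rfl⟩
    exact (H.dist_le_walk hp).trans (G.walkWeight_mono h1 p u)
  · rintro c ⟨p, hp, rfl⟩
    exact G.dist_le_walk_of h2 p u v hp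

lemma addU_w_le (X : Set (V × V)) (a b : V) : (G.addU X).w a b ≤ G.w a b := inf_le_left

lemma dist_le_addU_w (X : Set (V × V)) (a b : V) : G.dist a b ≤ (G.addU X).w a b :=
  le_inf (G.dist_le_w a b) (le_sInf (by rintro c ⟨-, rfl⟩; exact le_rfl))

lemma addU_w_le_dist {X : Set (V × V)} {a b : V} (h : (a, b) ∈ X ∨ (b, a) ∈ X) :
    (G.addU X).w a b ≤ G.dist a b :=
  inf_le_right.trans (sInf_le ⟨h, rfl⟩)

lemma dist_addU [Finite V] (X : Set (V × V)) (u v : V) :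
    (G.addU X).dist u v = G.dist u v :=
  G.dist_congr (G.addU_w_le X) (G.dist_le_addU_w X) u v

lemma addU_w_ne {X : Set (V × V)} {a b : V} (h : (G.addU X).w a b ≠ G.w a b) :
    ((a, b) ∈ X ∨ (b, a) ∈ X) ∧ (G.addU X).w a b = G.dist a b := by
  by_cases hc : (a, b) ∈ X ∨ (b, a) ∈ X
  · refine ⟨hc, ?_⟩
    have hset : {c | ((a, b) ∈ X ∨ (b, a) ∈ X) ∧ c = G.dist a b} = {G.dist a b} := by
      ext c; simp [hc]
    have hw : (G.addU X).w a b = G.w a b ⊓ G.dist a b := by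
      show G.w a b ⊓ sInf {c | ((a, b) ∈ X ∨ (b, a) ∈ X) ∧ c = G.dist a b} = _
      rw [hset, sInf_singleton]
    rcases le_total (G.w a b) (G.dist a b) with hle | hle
    · exact absurd (hw.trans (inf_eq_left.2 hle)) h
    · rw [hw, inf_eq_right.2 hle]
  · exfalso
    apply h
    have hset : {c | ((a, b) ∈ X ∨ (b, a) ∈ X) ∧ c = G.dist a b} = (∅ : Set ℝ≥0∞) := by
      ext c; simp [hc]
    show G.w a b ⊓ sInf {c | ((a, b) ∈ X ∨ (b, a) ∈ X) ∧ c = G.dist a b} = G.w a b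
    rw [hset, sInf_empty, inf_top_eq]

lemma reach_addU [Finite V] (X : Set (V × V)) (u : V) :
    (G.addU X).Reach u = G.Reach u := by
  unfold Reach; ext z; simp [G.dist_addU X]

lemma isClosest_addU [Finite V] (X : Set (V × V)) (ρ : ℕ) (u : V) (T : Set V) :
    (G.addU X).IsClosest ρ u T ↔ G.IsClosest ρ u T := by
  unfold IsClosest
  rw [G.reach_addU X]
  simp only [G.dist_addU X]

lemma hopdist_addU_le [Finite V] (X : Set (V × V)) (u v : V) :
    (G.addU X).hopdist u v ≤ G.hopdist u v := by
  by_cases hfin : G.dist u v = ⊤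
  · unfold hopdist
    rw [if_pos hfin]
    exact le_top
  · obtain ⟨p, hp, hw, hl⟩ := G.exists_hop_walk hfin
    have hfin' : (G.addU X).dist u v ≠ ⊤ := by rwa [G.dist_addU X]
    have hW' : (G.addU X).walkWeight u p = (G.addU X).dist u v := by
      rw [G.dist_addU X]
      refine le_antisymm ?_ ?_
      · exact le_trans (G.walkWeight_mono (G.addU_w_le X) p u) (le_of_eq hw)
      · exact G.dist_le_walk_of (G.dist_le_addU_w X) p u v hp
    calc (G.addU X).hopdist u v ≤ (p.length : ℕ∞) := (G.addU X).hopdist_le_length hp hW' hfin'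
      _ = G.hopdist u v := hl

lemma hasBall_addU [Finite V] {X : Set (V × V)} {k ρ : ℕ} {u : V} (h : G.HasBall k ρ u) :
    (G.addU X).HasBall k ρ u := by
  obtain ⟨T, hT, hhop⟩ := h
  exact ⟨T, (G.isClosest_addU X ρ u T).2 hT,
    fun v hv => le_trans (G.hopdist_addU_le X u v) (hhop v hv)⟩

lemma walk_reverse (hsym : G.Symm) : ∀ (p : List V) (u v : V), WalkEnds u p v →
    WalkEnds v ((u :: p).reverse.tail) u ∧
      G.walkWeight v ((u :: p).reverse.tail) = G.walkWeight u p
  | [], u, v, h => by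
    rw [walkEnds_nil] at h; subst h
    exact ⟨walkEnds_nil.2 rfl, by simp⟩
  | a :: q, u, v, h => by
    have h' : WalkEnds a q v := walkEnds_cons.1 h
    obtain ⟨ih1, ih2⟩ := walk_reverse hsym q a v h'
    have hne : (a :: q).reverse ≠ [] := by simp
    have hlist : (u :: a :: q).reverse.tail = (a :: q).reverse.tail ++ [u] := by
      rw [List.reverse_cons (a := u)]
      exact tail_append_singleton hne u
    rw [hlist]
    constructor
    · exact walkEnds_append ih1 (by unfold WalkEnds; rw [List.getLastD_cons]; rfl)
    · rw [G.walkWeight_append _ _ ih1, ih2]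
      simp only [walkWeight_cons, walkWeight_nil, add_zero]
      rw [hsym a u]
      rw [add_comm]

lemma dist_symm_le (hsym : G.Symm) (u v : V) : G.dist u v ≤ G.dist v u := by
  refine le_sInf ?_
  rintro c ⟨p, hp, rfl⟩
  obtain ⟨h1, h2⟩ := G.walk_reverse hsym p v u hp
  exact le_trans (G.dist_le_walk h1) (le_of_eq h2)

lemma dist_symm (hsym : G.Symm) (u v : V) : G.dist u v = G.dist v u :=
  le_antisymm (G.dist_symm_le hsym u v) (G.dist_symm_le hsym v u)

end WGraph
namespace WGraph

variable {V : Type*} (G : WGraph V)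

open StmtAux

lemma jump [Finite V] (hpos : G.Positive) {a b : V} (h : G.IsShortcut a b) {p : List V}
    (hp : WalkEnds a p b) (hw : G.walkWeight a p = G.dist a b)
    (hl : (p.length : ℕ∞) = G.hopdist a b) :
    ∃ x y, G.hopdist x y = 2 ∧ G.dist x y ≠ ⊤ ∧
      ∃ c l1 l2, a :: p = l1 ++ x :: c :: y :: l2 := by
  have hfin : G.dist a b ≠ ⊤ := h.1
  have hm2 : 2 ≤ p.length := by
    have h1 : (1 : ℕ∞) < (p.length : ℕ∞) := by rw [hl]; exact h.2
    have : 1 < p.length := by exact_mod_cast h1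
    omega
  have htrip : ∀ (l1 l2 : List V) (x c y : V), a :: p = l1 ++ x :: c :: y :: l2 →
      G.dist x y = G.w x c + G.w c y ∧ G.dist x y ≠ ⊤ ∧ G.hopdist x y ≤ 2 ∧ x ≠ y := by
    intro l1 l2 x c y hd
    have hd' : a :: p = l1 ++ x :: ([c] ++ y :: l2) := by simpa using hd
    obtain ⟨hsum, hxy, hlt, -, hyfin⟩ := G.walk_decomp2 hpos hp hw hfin hd'
    have hxyw : G.dist x y = G.w x c + G.w c y := by simpa using hxy
    have hxyfin : G.dist x y ≠ ⊤ := by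
      intro ht; rw [hsum, ht, add_top] at hyfin; exact hyfin rfl
    have hends : WalkEnds x [c, y] y := by
      unfold WalkEnds; simp
    have hle : G.hopdist x y ≤ 2 := by
      have h2 := G.hopdist_le_length hends (by simp [hxyw, add_assoc]) hxyfin
      simpa using h2
    have h0 : 0 < G.dist x y := by
      rw [hxyw]
      calc (0 : ℝ≥0∞) < G.w x c := hpos x c
        _ ≤ _ := le_add_right le_rfl
    have hne : x ≠ y := by
      intro he; subst he
      rw [G.dist_self] at h0
      exact lt_irrefl _ h0
    exact ⟨hxyw, hxyfin, hle, hne⟩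
  by_contra hcon
  push_neg at hcon
  have hne1 : ∀ (l1 l2 : List V) (x c y : V), a :: p = l1 ++ x :: c :: y :: l2 →
      G.w x y = G.w x c + G.w c y := by
    intro l1 l2 x c y hd
    obtain ⟨hxyw, hxyfin, hle, hxyne⟩ := htrip l1 l2 x c y hd
    have h2ne : G.hopdist x y ≠ 2 := fun h2 => hcon x y h2 hxyfin c l1 l2 hd
    obtain ⟨q, hqE, hqW, hqL⟩ := G.exists_hop_walk hxyfin
    have hq2 : q.length ≤ 2 := by
      have : (q.length : ℕ∞) ≤ 2 := hqL ▸ hle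
      exact_mod_cast this
    have hq0 : q.length ≠ 0 := by
      intro h0
      rw [List.length_eq_zero_iff.1 h0] at hqE
      exact hxyne (walkEnds_nil.1 hqE)
    have hq2' : q.length ≠ 2 := by
      intro h2; apply h2ne; rw [← hqL, h2]; rfl
    have hq1 : q.length = 1 := by omega
    obtain ⟨z, rfl⟩ := List.length_eq_one_iff.1 hq1
    have hz : z = y := by unfold WalkEnds at hqE; simpa using hqE
    rw [hz] at hqW
    have hwxy : G.w x y = G.dist x y := by simpa using hqW
    rw [hwxy, hxyw]
  have hskip : ∀ (n : ℕ) (q : List V) (e : V) (l1 : List V), q.length ≤ n →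
      a :: p = l1 ++ e :: q →
      ∃ r : List V, WalkEnds e r (q.getLastD e) ∧ G.walkWeight e r = G.walkWeight e q ∧
        2 * r.length ≤ q.length + 1 := by
    intro n
    induction n with
    | zero =>
      intro q e l1 hlen hd
      rw [List.length_eq_zero_iff.1 (Nat.le_zero.1 hlen)]
      exact ⟨[], walkEnds_nil.2 rfl, rfl, by simp⟩
    | succ m ih =>
      intro q e l1 hlen hd
      rcases q with _ | ⟨c, _ | ⟨y, t⟩⟩
      · exact ⟨[], walkEnds_nil.2 rfl, rfl, by simp⟩
      · exact ⟨[c], rfl, rfl, by simp⟩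
      · obtain ⟨r, hr1, hr2, hr3⟩ := ih (y :: t).tail y (l1 ++ [e, c])
          (by simp at hlen ⊢; omega) (by rw [hd]; simp)
        simp only [List.tail_cons] at hr1 hr2 hr3
        refine ⟨y :: r, ?_, ?_, ?_⟩
        · unfold WalkEnds at hr1 ⊢
          rw [List.getLastD_cons, List.getLastD_cons, List.getLastD_cons]
          exact hr1
        · simp only [walkWeight_cons]
          rw [hr2, hne1 l1 t e c y hd, add_assoc]
        · simp only [List.length_cons] at hr3 ⊢; omega
  obtain ⟨r, hr1, hr2, hr3⟩ := hskip p.length p a [] le_rfl rfl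
  have hb : p.getLastD a = b := hp
  rw [hb] at hr1
  rw [hw] at hr2
  have hge : (p.length : ℕ∞) ≤ (r.length : ℕ∞) := by
    rw [hl]; exact G.hopdist_le_length hr1 hr2 hfin
  have hple : p.length ≤ r.length := by exact_mod_cast hge
  omega

end WGraph
namespace StmtAux

lemma infix_cons_of_infix {α : Type*} {l l2 : List α} (a : α) (h : l <:+: l2) :
    l <:+: a :: l2 := by
  obtain ⟨s, t, hst⟩ := h
  exact ⟨a :: s, t, by rw [← hst]; simp⟩

end StmtAux

namespace WGraph

variable {V : Type*} (G : WGraph V)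

open StmtAux

lemma expand [Finite V] (hsym : G.Symm) {X : Set (V × V)} (P : V → V → List V)
    (hP : ∀ a b, (a, b) ∈ X → WalkEnds a (P a b) b ∧ G.walkWeight a (P a b) = G.dist a b) :
    ∀ (p : List V) (u v : V), WalkEnds u p v →
    ∃ Q : List V, WalkEnds u Q v ∧ G.walkWeight u Q = (G.addU X).walkWeight u p ∧
      (Q = p ∨ ∃ a b, (a, b) ∈ X ∧
        ((a :: P a b) <:+: (u :: Q) ∨ (a :: P a b).reverse <:+: (u :: Q))) := by
  intro p
  induction p with
  | nil =>
    intro u v h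
    exact ⟨[], h, by simp, Or.inl rfl⟩
  | cons z t ih =>
    intro u v h
    obtain ⟨Q', hQ'E, hQ'W, hQ'alt⟩ := ih z v (walkEnds_cons.1 h)
    by_cases hw : (G.addU X).w u z = G.w u z
    · refine ⟨z :: Q', walkEnds_cons.2 hQ'E, ?_, ?_⟩
      · simp only [walkWeight_cons, hQ'W, hw]
      · rcases hQ'alt with rfl | ⟨a, b, hab, hinf⟩
        · exact Or.inl rfl
        · refine Or.inr ⟨a, b, hab, ?_⟩
          rcases hinf with h1 | h1
          · exact Or.inl (infix_cons_of_infix u h1)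
          · exact Or.inr (infix_cons_of_infix u h1)
    · obtain ⟨hmem, hwd⟩ := G.addU_w_ne hw
      rcases hmem with hmem | hmem
      · obtain ⟨hPE, hPW⟩ := hP u z hmem
        refine ⟨P u z ++ Q', walkEnds_append hPE hQ'E, ?_, ?_⟩
        · rw [G.walkWeight_append _ _ hPE, hPW, hQ'W]
          simp only [walkWeight_cons, hwd]
        · exact Or.inr ⟨u, z, hmem, Or.inl ⟨[], Q', by simp⟩⟩
      · obtain ⟨hPE, hPW⟩ := hP z u hmem
        obtain ⟨hRE, hRW⟩ := G.walk_reverse hsym (P z u) z u hPE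
        refine ⟨(z :: P z u).reverse.tail ++ Q', walkEnds_append hRE hQ'E, ?_, ?_⟩
        · rw [G.walkWeight_append _ _ hRE, hRW, hPW, hQ'W]
          simp only [walkWeight_cons, hwd, G.dist_symm hsym z u]
        · refine Or.inr ⟨z, u, hmem, Or.inr ?_⟩
          have hlast : (z :: P z u).getLastD z = u := by
            rw [List.getLastD_cons]; exact hPE
          have hhead : (z :: P z u).reverse = u :: (z :: P z u).reverse.tail :=
            reverse_cons_of_getLastD hlast (List.cons_ne_nil _ _)
          exact ⟨[], Q', by rw [hhead]; simp⟩

end WGraph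

open StmtAux WGraph

/-- any `(k,k+1)`-shortcut set `S` of an undirected weighted graph can be
replaced by a `(k,k+1)`-shortcut set `S'` with `|S'| ≤ |S|` all of whose shortcuts
`{u,v}` satisfy `hopdist_G(u,v) = 2`. -/
theorem stmt6 {V : Type*} [Finite V] (G : WGraph V) (hsym : G.Symm)
    (hpos : G.Positive) (k : ℕ) (hk : 1 ≤ k) (S : Set (V × V))
    (hS : G.IsShortcutSetU k (k + 1) S) :
    ∃ S' : Set (V × V), S'.ncard ≤ S.ncard ∧ G.IsShortcutSetU k (k + 1) S' ∧
      ∀ p ∈ S', G.hopdist p.1 p.2 = 2 := by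
  classical
  obtain ⟨hshort, hball, hdist⟩ := hS
  have hPex : ∀ a b : V, ∃ p : List V, G.IsShortcut a b →
      WalkEnds a p b ∧ G.walkWeight a p = G.dist a b ∧ (p.length : ℕ∞) = G.hopdist a b := by
    intro a b
    by_cases hab : G.IsShortcut a b
    · obtain ⟨p, h1, h2, h3⟩ := G.exists_hop_walk hab.1
      exact ⟨p, fun _ => ⟨h1, h2, h3⟩⟩
    · exact ⟨[], fun hc => absurd hc hab⟩
  choose P hP using hPex
  have hJex : ∀ a b : V, ∃ xy : V × V, G.IsShortcut a b →
      G.hopdist xy.1 xy.2 = 2 ∧ G.dist xy.1 xy.2 ≠ ⊤ ∧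
      ∃ c l1 l2, a :: P a b = l1 ++ xy.1 :: c :: xy.2 :: l2 := by
    intro a b
    by_cases hab : G.IsShortcut a b
    · obtain ⟨h1, h2, h3⟩ := hP a b hab
      obtain ⟨x, y, hh1, hh2, hh3⟩ := G.jump hpos hab h1 h2 h3
      exact ⟨(x, y), fun _ => ⟨hh1, hh2, hh3⟩⟩
    · exact ⟨(a, a), fun hc => absurd hc hab⟩
  choose J hJ using hJex
  set S' : Set (V × V) := (fun e : V × V => J e.1 e.2) '' S with hS'def
  have hS'spec : ∀ e ∈ S', G.hopdist e.1 e.2 = 2 ∧ G.dist e.1 e.2 ≠ ⊤ := by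
    rintro e ⟨⟨a, b⟩, hab, rfl⟩
    obtain ⟨h1, h2, -⟩ := hJ a b (hshort (a, b) hab)
    exact ⟨h1, h2⟩
  refine ⟨S', Set.ncard_image_le (Set.toFinite S), ⟨?_, ?_, fun x y => G.dist_addU S' x y⟩, ?_⟩
  · rintro e he
    obtain ⟨h1, h2⟩ := hS'spec e he
    refine ⟨h2, ?_⟩
    rw [h1]
    exact_mod_cast Nat.one_lt_cast.2 one_lt_two
  · intro u
    by_cases hgb : G.HasBall k (k + 1) u
    · exact G.hasBall_addU hgb
    · -- bad vertex u
      obtain ⟨T, hTc', hThop⟩ := hball u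
      rw [G.isClosest_addU] at hTc'
      obtain ⟨hTsub, hTcard, hTmin⟩ := hTc'
      -- every vertex of a min-weight walk to a member of T lies in T
      have hvert : ∀ v0, v0 ∈ T → ∀ (q : List V), WalkEnds u q v0 →
          G.walkWeight u q = G.dist u v0 → ∀ z ∈ q, z ∈ T := by
        intro v0 hv0 q hq hqw z hz
        have hfin0 : G.dist u v0 ≠ ⊤ := (hTsub hv0).2
        obtain ⟨m, m', rfl⟩ := List.append_of_mem hz
        have hd : u :: (m ++ z :: m') = (u :: m) ++ z :: m' := by simp
        obtain ⟨-, hsufE, hsufW, hsum⟩ := G.walk_decomp hq hqw hfin0 hd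
        obtain ⟨-, -, hzpos, hzle, hzfin⟩ := G.walk_decomp2 hpos hq hqw hfin0
          (l1 := []) (mid := m) (x := u) (y := z) (l2 := m') (by simp)
        have hzne : z ≠ u := by
          intro he; subst he
          rw [G.dist_self] at hzpos; exact lt_irrefl _ hzpos
        have hzReach : z ∈ G.Reach u := ⟨hzne, hzfin⟩
        by_contra hzT
        rcases m' with _ | ⟨c, m''⟩
        · exact hzT ((walkEnds_nil.1 hsufE) ▸ hv0)
        · have hzv : G.dist z v0 ≠ 0 := by
            rw [← hsufW]; exact (G.walkWeight_pos hpos z c m'').ne'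
          have hlt : G.dist u z < G.dist u v0 := by
            rw [hsum]
            exact ENNReal.lt_add_right hzfin hzv
          exact absurd (hTmin v0 hv0 z ⟨hzReach, hzT⟩) (not_le.2 hlt)
      -- a far vertex v0
      have hbig : ∃ v0 ∈ T, ¬ G.hopdist u v0 ≤ (k : ℕ∞) := by
        by_contra hno
        push_neg at hno
        exact hgb ⟨T, ⟨hTsub, hTcard, hTmin⟩, hno⟩
      obtain ⟨v0, hv0T, hv0hop⟩ := hbig
      have hfin0 : G.dist u v0 ≠ ⊤ := (hTsub hv0T).2
      obtain ⟨p, hpE, hpW, hpL⟩ := G.exists_hop_walk hfin0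
      have hnodup : (u :: p).Nodup := by
        by_contra hnd
        obtain ⟨x, l1, l2, l3, hdd⟩ := exists_dup_decomp hnd
        obtain ⟨-, -, hlt, -, -⟩ := G.walk_decomp2 hpos hpE hpW hfin0 hdd
        exact lt_irrefl _ hlt
      have hpnodup : p.Nodup := (List.nodup_cons.1 hnodup).2
      have hsubT : ∀ z ∈ p, z ∈ T := hvert v0 hv0T p hpE hpW
      have hTfin : T.Finite := Set.toFinite T
      have hTle : T.ncard ≤ k + 1 := by rw [hTcard]; exact min_le_right _ _
      have hple : p.length ≤ T.ncard := by
        have hsub : ↑p.toFinset ⊆ T := by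
          intro z hz
          simp only [List.coe_toFinset, Set.mem_setOf_eq] at hz
          exact hsubT z hz
        have h1 : (↑p.toFinset : Set V).ncard ≤ T.ncard := Set.ncard_le_ncard hsub hTfin
        rwa [Set.ncard_coe_finset, List.toFinset_card_of_nodup hpnodup] at h1
      have hklt : k + 1 ≤ p.length := by
        have h1 : (k : ℕ∞) < (p.length : ℕ∞) := by rw [hpL]; exact not_le.1 hv0hop
        have h2 : k < p.length := by exact_mod_cast h1
        omega
      have hplen : p.length = k + 1 := le_antisymm (hple.trans hTle) hklt
      have hTcard' : T.ncard = k + 1 := le_antisymm hTle (hplen ▸ hple)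
      have hTeq : ∀ z ∈ T, z ∈ p := by
        have hsub : ↑p.toFinset ⊆ T := by
          intro z hz
          simp only [List.coe_toFinset, Set.mem_setOf_eq] at hz
          exact hsubT z hz
        have hcard : T.ncard ≤ (↑p.toFinset : Set V).ncard := by
          rw [Set.ncard_coe_finset, List.toFinset_card_of_nodup hpnodup, hTcard', hplen]
        have heq := Set.eq_of_subset_of_ncard_le hsub hcard hTfin
        intro z hz
        rw [← heq] at hz
        simpa using hz
      -- hop distance equals position along the chain
      have hidx : ∀ (l1 l2 : List V) (x : V), u :: p = l1 ++ x :: l2 →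
          G.hopdist u x = (l1.length : ℕ∞) ∧ G.dist u x ≠ ⊤ := by
        intro l1 l2 x hd
        obtain ⟨⟨q, hqE, hqW, hqS⟩, hsufE, hsufW, hsum⟩ := G.walk_decomp hpE hpW hfin0 hd
        have hfinx : G.dist u x ≠ ⊤ := by
          intro ht; rw [hsum, ht, top_add] at hfin0; exact hfin0 rfl
        have hqlen : q.length = l1.length := by
          have h1 := congrArg List.length hqS
          simp at h1; omega
        have hle : G.hopdist u x ≤ (l1.length : ℕ∞) := by
          rw [← hqlen]; exact G.hopdist_le_length hqE hqW hfinx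
        have hlen12 : l1.length + l2.length = p.length := by
          have h1 := congrArg List.length hd
          simp at h1; omega
        refine ⟨le_antisymm hle ?_, hfinx⟩
        by_contra hlt
        push_neg at hlt
        obtain ⟨r, hrE, hrW, hrL⟩ := G.exists_hop_walk hfinx
        have hrlen : r.length < l1.length := by
          have h1 : (r.length : ℕ∞) < (l1.length : ℕ∞) := by rw [hrL]; exact hlt
          exact_mod_cast h1
        have hE2 : WalkEnds u (r ++ l2) v0 := walkEnds_append hrE hsufE
        have hW2 : G.walkWeight u (r ++ l2) = G.dist u v0 := by
          rw [G.walkWeight_append _ _ hrE, hrW, hsufW, ← hsum]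
        have h3 := G.hopdist_le_length hE2 hW2 hfin0
        rw [← hpL] at h3
        have h4 : p.length ≤ (r ++ l2).length := by exact_mod_cast h3
        simp [List.length_append] at h4
        omega
      -- order along the chain
      have horder : ∀ (m1 m2 l1 l2 : List V) (z x : V), u :: p = m1 ++ z :: m2 →
          u :: p = l1 ++ x :: l2 → m1.length < l1.length → G.dist u z < G.dist u x := by
        intro m1 m2 l1 l2 z x hd1 hd2 hlen
        have heq : m1 ++ z :: m2 = l1 ++ x :: l2 := by rw [← hd1, ← hd2]
        rcases List.append_eq_append_iff.1 heq with ⟨a', ha1, ha2⟩ | ⟨c', hc1, hc2⟩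
        · cases a' with
          | nil =>
            exfalso
            have := congrArg List.length ha1
            simp at this; omega
          | cons zz a'' =>
            have hzz : zz = z ∧ m2 = a'' ++ x :: l2 := by
              have h5 := ha2
              injection h5 with h6 h7
              exact ⟨h6.symm, h7⟩
            obtain ⟨rfl, hm2eq⟩ := hzz
            obtain ⟨-, -, hlt, -, -⟩ := G.walk_decomp2 hpos hpE hpW hfin0
              (show u :: p = m1 ++ zz :: (a'' ++ x :: l2) by rw [hd1, hm2eq])
            exact hlt
        · exfalso
          have := congrArg List.length hc1
          simp at this; omega
      -- rigidity: the minimum-weight walk to v0 is unique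
      have hrigid : ∀ (q : List V) (l1 : List V) (x : V) (l2 : List V), u :: p = l1 ++ x :: l2 →
          WalkEnds x q v0 → G.walkWeight x q = G.dist x v0 → q = l2 := by
        intro q
        induction q with
        | nil =>
          intro l1 x l2 hd hE hW
          have hx : x = v0 := walkEnds_nil.1 hE
          cases l2 with
          | nil => rfl
          | cons c l2' =>
            exfalso
            have hlast : (c :: l2').getLastD x = v0 := by
              have h1 : (u :: p).getLastD u = v0 := by
                rw [List.getLastD_cons]; exact hpE
              rw [hd, getLastD_app] at h1; exact h1
            have hmem : x ∈ c :: l2' := by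
              have h2 := getLastD_mem (List.cons_ne_nil c l2') x
              rw [hlast, ← hx] at h2
              exact h2
            have hnd : (x :: c :: l2').Nodup := by
              have h2 := hnodup
              rw [hd] at h2
              exact h2.of_append_right
            exact (List.nodup_cons.1 hnd).1 hmem
        | cons z q' ih =>
          intro l1 x l2 hd hE hW
          obtain ⟨⟨qpre, hqpreE, hqpreW, hqpreS⟩, hsufE, hsufW, hsum⟩ :=
            G.walk_decomp hpE hpW hfin0 hd
          have hfinx : G.dist x v0 ≠ ⊤ := by
            intro ht; rw [hsum, ht, add_top] at hfin0; exact hfin0 rfl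
          cases l2 with
          | nil =>
            exfalso
            have hx : x = v0 := walkEnds_nil.1 hsufE
            rw [hx, G.dist_self] at hW
            exact (G.walkWeight_pos hpos v0 z q').ne' hW
          | cons c l2' =>
            have hfullE : WalkEnds u (qpre ++ z :: q') v0 := walkEnds_append hqpreE hE
            have hfullW : G.walkWeight u (qpre ++ z :: q') = G.dist u v0 := by
              rw [G.walkWeight_append _ _ hqpreE, hqpreW, hW, ← hsum]
            have hzT : z ∈ T := hvert v0 hv0T _ hfullE hfullW z (by simp)
            obtain ⟨m1, m2, hm⟩ := List.append_of_mem (List.mem_cons_of_mem u (hTeq z hzT))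
            have hidxz := hidx m1 m2 z hm
            have hd2 : u :: (qpre ++ z :: q') = (l1 ++ [x]) ++ z :: q' := by
              rw [show u :: (qpre ++ z :: q') = (u :: qpre) ++ z :: q' from by simp, hqpreS]
            obtain ⟨⟨qz, hqzE, hqzW, hqzS⟩, -, -, -⟩ := G.walk_decomp hfullE hfullW hfin0 hd2
            have hqzlen : qz.length = l1.length + 1 := by
              have h1 := congrArg List.length hqzS
              simp at h1; omega
            have hople : G.hopdist u z ≤ ((l1.length + 1 : ℕ) : ℕ∞) := by
              rw [← hqzlen]
              exact G.hopdist_le_length hqzE hqzW hidxz.2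
            have hd3 : u :: (qpre ++ z :: q') = l1 ++ x :: ([] ++ z :: q') := by
              rw [show u :: (qpre ++ z :: q') = (u :: qpre) ++ z :: q' from by simp, hqpreS]
              simp
            obtain ⟨-, -, hltxz, -, -⟩ := G.walk_decomp2 hpos hfullE hfullW hfin0 hd3
            have hm1len : m1.length = l1.length + 1 := by
              have hub : m1.length ≤ l1.length + 1 := by
                have h1 : (m1.length : ℕ∞) ≤ ((l1.length + 1 : ℕ) : ℕ∞) := by
                  rw [← hidxz.1]; exact hople
                exact_mod_cast h1
              have hlb : ¬ m1.length ≤ l1.length := by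
                intro hle2
                rcases lt_or_eq_of_le hle2 with hlt2 | heq2
                · exact absurd (horder m1 m2 l1 (c :: l2') z x hm hd hlt2)
                    (not_lt.2 (le_of_lt hltxz))
                · obtain ⟨h5, h6⟩ := List.append_inj (hm.symm.trans hd) heq2
                  injection h6 with h7 h8
                  subst h7
                  exact lt_irrefl _ hltxz
              omega
            have hd4 : u :: p = (l1 ++ [x]) ++ c :: l2' := by rw [hd]; simp
            have hinj := List.append_inj (hm.symm.trans hd4) (by simp [hm1len])
            injection hinj.2 with hzc hm2eq
            have hd5 : x :: (z :: q') = [x] ++ z :: q' := by simp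
            obtain ⟨-, hsuf2E, hsuf2W, -⟩ := G.walk_decomp hE hW hfinx hd5
            have hrec := ih (l1 ++ [x]) z l2' (by rw [hd4, ← hzc]) hsuf2E hsuf2W
            rw [hrec, hzc]
      -- expand the ball walk in G + S
      have hhop' : (G.addU S).hopdist u v0 ≤ (k : ℕ∞) := hThop v0 hv0T
      have hfin' : (G.addU S).dist u v0 ≠ ⊤ := by rw [G.dist_addU]; exact hfin0
      obtain ⟨Wq, hWE, hWW, hWL⟩ := (G.addU S).exists_hop_walk hfin'
      have hWlen : Wq.length ≤ k := by
        have h1 : (Wq.length : ℕ∞) ≤ (k : ℕ∞) := by rw [hWL]; exact hhop'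
        exact_mod_cast h1
      have hPprop : ∀ a b : V, (a, b) ∈ S →
          WalkEnds a (P a b) b ∧ G.walkWeight a (P a b) = G.dist a b := by
        intro a b hab
        obtain ⟨h1, h2, -⟩ := hP a b (hshort (a, b) hab)
        exact ⟨h1, h2⟩
      obtain ⟨Q, hQE, hQW, hQalt⟩ := G.expand hsym P hPprop Wq u v0 hWE
      have hQmin : G.walkWeight u Q = G.dist u v0 := by
        rw [hQW, hWW, G.dist_addU]
      have hQp : Q = p := hrigid Q [] u p rfl hQE hQmin
      have hjump : ∃ x y c m1 m2, u :: p = m1 ++ x :: c :: y :: m2 ∧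
          ((x, y) ∈ S' ∨ (y, x) ∈ S') := by
        rcases hQalt with hQW2 | ⟨a, b, habS, hinf⟩
        · exfalso
          have h1 : p.length ≤ k := by rw [← hQp, hQW2]; exact hWlen
          omega
        · rw [hQp] at hinf
          obtain ⟨hj2, hjfin, c0, t1, t2, hjdec⟩ := hJ a b (hshort (a, b) habS)
          have hmemS' : (J a b) ∈ S' := ⟨(a, b), habS, rfl⟩
          rcases hinf with ⟨s, t, hst⟩ | ⟨s, t, hst⟩
          · refine ⟨(J a b).1, (J a b).2, c0, s ++ t1, t2 ++ t, ?_, Or.inl hmemS'⟩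
            rw [← hst, hjdec]; simp
          · refine ⟨(J a b).2, (J a b).1, c0, s ++ t2.reverse, t1.reverse ++ t, ?_,
              Or.inr hmemS'⟩
            rw [← hst, hjdec]; simp
      obtain ⟨x0, y0, c0, m1, m2, hcdec, hmemS'⟩ := hjump
      have hx0y0 : (G.addU S').w x0 y0 ≤ G.dist x0 y0 := G.addU_w_le_dist hmemS'
      have hdxy : G.dist x0 y0 ≤ G.w x0 c0 + G.w c0 y0 := by
        have hends : WalkEnds x0 [c0, y0] y0 := by unfold WalkEnds; simp
        have h1 := G.dist_le_walk hends
        simpa [add_assoc] using h1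
      -- the ball in G + S'
      refine ⟨T, (G.isClosest_addU S' (k + 1) u T).2 ⟨hTsub, hTcard, hTmin⟩, ?_⟩
      intro v hvT
      have hfinv : G.dist u v ≠ ⊤ := (hTsub hvT).2
      have hfinv' : (G.addU S').dist u v ≠ ⊤ := by rw [G.dist_addU]; exact hfinv
      obtain ⟨r1, r2, hr⟩ := List.append_of_mem (List.mem_cons_of_mem u (hTeq v hvT))
      by_cases hcase : r1.length ≤ k
      · obtain ⟨⟨qv, hqvE, hqvW, hqvS⟩, -, -, -⟩ := G.walk_decomp hpE hpW hfin0 hr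
        have hq'W : (G.addU S').walkWeight u qv = (G.addU S').dist u v := by
          rw [G.dist_addU]
          refine le_antisymm ?_ ?_
          · exact le_trans (G.walkWeight_mono (G.addU_w_le S') qv u) (le_of_eq hqvW)
          · exact G.dist_le_walk_of (G.dist_le_addU_w S') qv u v hqvE
        have hlenv : qv.length = r1.length := by
          have h1 := congrArg List.length hqvS
          simp at h1; omega
        calc (G.addU S').hopdist u v ≤ (qv.length : ℕ∞) :=
              (G.addU S').hopdist_le_length hqvE hq'W hfinv'
          _ ≤ (k : ℕ∞) := by rw [hlenv]; exact_mod_cast hcase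
      · have hr1len : r1.length = k + 1 ∧ r2.length = 0 := by
          have h1 := congrArg List.length hr
          simp [hplen] at h1
          omega
        have hr2nil : r2 = [] := List.length_eq_zero_iff.1 hr1len.2
        subst hr2nil
        have hv0v : v = v0 := by
          have h1 : (u :: p).getLastD u = v0 := by rw [List.getLastD_cons]; exact hpE
          rw [hr, getLastD_app] at h1
          exact h1
        subst hv0v
        -- build the shortened walk via the 2-jump
        cases m1 with
        | nil =>
          have hx0u : u = x0 ∧ p = c0 :: y0 :: m2 := by
            rw [List.nil_append] at hcdec
            injection hcdec with h1 h2
            exact ⟨h1, h2⟩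
          obtain ⟨hux, hp2⟩ := hx0u
          have hNE : WalkEnds u (y0 :: m2) v := by
            unfold WalkEnds at hpE ⊢
            rw [hp2] at hpE
            simpa [List.getLastD_cons] using hpE
          have hNW : (G.addU S').walkWeight u (y0 :: m2) = (G.addU S').dist u v := by
            rw [G.dist_addU]
            refine le_antisymm ?_ (G.dist_le_walk_of (G.dist_le_addU_w S') _ u v hNE)
            calc (G.addU S').walkWeight u (y0 :: m2)
                = (G.addU S').w u y0 + (G.addU S').walkWeight y0 m2 := rfl
              _ ≤ G.dist x0 y0 + G.walkWeight y0 m2 := by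
                  refine add_le_add ?_ (G.walkWeight_mono (G.addU_w_le S') m2 y0)
                  rw [hux]; exact hx0y0
              _ ≤ (G.w x0 c0 + G.w c0 y0) + G.walkWeight y0 m2 := add_le_add_left hdxy _
              _ = G.walkWeight u p := by rw [hp2, hux]; simp [add_assoc]
              _ = G.dist u v := hpW
          have hNlen : m2.length + 1 = k := by
            have h1 := congrArg List.length hp2
            simp [hplen] at h1
            omega
          calc (G.addU S').hopdist u v ≤ ((y0 :: m2).length : ℕ∞) :=
                (G.addU S').hopdist_le_length hNE hNW hfinv'
            _ ≤ (k : ℕ∞) := by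
                simp only [List.length_cons]
                exact_mod_cast le_of_eq hNlen
        | cons uu m1' =>
          have hp2 : uu = u ∧ p = m1' ++ x0 :: c0 :: y0 :: m2 := by
            rw [List.cons_append] at hcdec
            injection hcdec with h1 h2
            exact ⟨h1.symm, h2⟩
          obtain ⟨-, hp2⟩ := hp2
          have hNE : WalkEnds u (m1' ++ x0 :: y0 :: m2) v := by
            unfold WalkEnds at hpE ⊢
            rw [hp2] at hpE
            rw [getLastD_app] at hpE ⊢
            simpa [List.getLastD_cons] using hpE
          have hNW : (G.addU S').walkWeight u (m1' ++ x0 :: y0 :: m2) =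
              (G.addU S').dist u v := by
            rw [G.dist_addU]
            refine le_antisymm ?_ (G.dist_le_walk_of (G.dist_le_addU_w S') _ u v hNE)
            calc (G.addU S').walkWeight u (m1' ++ x0 :: y0 :: m2)
                = (G.addU S').walkWeight u (m1' ++ [x0]) +
                    ((G.addU S').w x0 y0 + (G.addU S').walkWeight y0 m2) := by
                  rw [(G.addU S').walkWeight_split u x0 m1' (y0 :: m2)]; rfl
              _ ≤ G.walkWeight u (m1' ++ [x0]) +
                    ((G.w x0 c0 + G.w c0 y0) + G.walkWeight y0 m2) := by
                  refine add_le_add (G.walkWeight_mono (G.addU_w_le S') _ u) ?_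
                  exact add_le_add (hx0y0.trans hdxy) (G.walkWeight_mono (G.addU_w_le S') m2 y0)
              _ = G.walkWeight u p := by
                  rw [hp2, G.walkWeight_split u x0 m1' (c0 :: y0 :: m2)]
                  simp [add_assoc]
              _ = G.dist u v := hpW
          have hNlen : (m1' ++ x0 :: y0 :: m2).length = k := by
            have h1 := congrArg List.length hp2
            simp [hplen] at h1
            simp [List.length_append]
            omega
          calc (G.addU S').hopdist u v ≤ (((m1' ++ x0 :: y0 :: m2)).length : ℕ∞) :=
                (G.addU S').hopdist_le_length hNE hNW hfinv'
            _ ≤ (k : ℕ∞) := by rw [hNlen]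
  · intro e he
    exact (hS'spec e he).1
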